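/- Let N be a tier-1 binary phylogenetic network with embedded tree T. Then there exists a tier-1 network M containing a triangle, with T as its embedded tree, such that M is obtained from N by a single head move. -/

import Mathlib

noncomputable section

namespace Phylo

/-- In-degree of a vertex in a digraph given by an edge relation. -/
def indeg {V : Type} (E : V → V → Prop) (v : V) : ℕ := Nat.card {u // E u v}

/-- Out-degree of a vertex in a digraph given by an edge relation. -/
def outdeg {V : Type} (E : V → V → Prop) (v : V) : ℕ := Nat.card {w // E v w}

def IsRoot {V : Type} (E : V → V → Prop) (v : V) : Prop := indeg E v = 0 ∧ outdeg E v = 1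
def IsLeafNode {V : Type} (E : V → V → Prop) (v : V) : Prop := indeg E v = 1 ∧ outdeg E v = 0
def IsSplit {V : Type} (E : V → V → Prop) (v : V) : Prop := indeg E v = 1 ∧ outdeg E v = 2
def IsRetic {V : Type} (E : V → V → Prop) (v : V) : Prop := indeg E v = 2 ∧ outdeg E v = 1

/-- A directed graph is acyclic if no vertex lies on a directed cycle. -/
def Acyclic {V : Type} (E : V → V → Prop) : Prop := ∀ v, ¬ Relation.TransGen E v v

/-- `(V, E)` together with the leaf-labelling `lab : X → V` is a binary phylogenetic
network on leaf set `X`: an acyclic digraph with a unique root (indeg 0, outdeg 1),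
leaves (indeg 1, outdeg 0) bijectively labelled by `X`, and all other nodes split
nodes (indeg 1, outdeg 2) or reticulations (indeg 2, outdeg 1). -/
structure IsPhyloNet {V X : Type} [Fintype V] (E : V → V → Prop) (lab : X → V) : Prop where
  acyclic : Acyclic E
  root_unique : ∃! v, IsRoot E v
  lab_inj : Function.Injective lab
  leaf_iff : ∀ v, IsLeafNode E v ↔ v ∈ Set.range lab
  node_types : ∀ v, IsRoot E v ∨ IsLeafNode E v ∨ IsSplit E v ∨ IsRetic E v

/-- The reticulation number of a digraph. -/
def reticCount {V : Type} (E : V → V → Prop) : ℕ := Nat.card {v // IsRetic E v}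

/-- Labelled isomorphism of leaf-labelled digraphs. -/
def LabIso {V V' X : Type} (E : V → V → Prop) (lab : X → V)
    (E' : V' → V' → Prop) (lab' : X → V') : Prop :=
  ∃ φ : V ≃ V', (∀ a b, E a b ↔ E' (φ a) (φ b)) ∧ ∀ x, φ (lab x) = lab' x

/-- Result of the head move of the edge `(u,v)` to the edge `(s,t)`, where `p` is the
other parent of the reticulation `v` and `c` its child.  The former head `v` is reused
as the node `v'` subdividing `(s,t)`: we delete `(u,v), (p,v), (v,c), (s,t)`, add
`(p,c)` (suppressing `v`), `(s,v), (v,t)` (subdividing `(s,t)` by `v' = v`), and the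
new edge `(u,v') = (u,v)`. -/
def headMoveEdges {V : Type} (E : V → V → Prop) (u v p c s t : V) : V → V → Prop :=
  fun a b =>
    (E a b ∧ (a, b) ≠ (p, v) ∧ (a, b) ≠ (v, c) ∧ (a, b) ≠ (s, t) ∧ (a, b) ≠ (u, v))
      ∨ (a, b) = (p, c) ∨ (a, b) = (s, v) ∨ (a, b) = (v, t) ∨ (a, b) = (u, v)

/-- Result of the tail move of the edge `(u,v)` to the edge `(s,t)`, where `p` is the
parent of the split node `u` and `c` its other child; `u` is reused as the node `u'`
subdividing `(s,t)`. -/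
def tailMoveEdges {V : Type} (E : V → V → Prop) (u v p c s t : V) : V → V → Prop :=
  fun a b =>
    (E a b ∧ (a, b) ≠ (p, u) ∧ (a, b) ≠ (u, c) ∧ (a, b) ≠ (s, t) ∧ (a, b) ≠ (u, v))
      ∨ (a, b) = (p, c) ∨ (a, b) = (s, u) ∨ (a, b) = (u, t) ∨ (a, b) = (u, v)

/-- A leaf-labelled digraph on a finite vertex set, the carrier for phylogenetic
networks on leaf set `X`. -/
structure Net (X : Type) where
  V : Type
  fin : Fintype V
  E : V → V → Prop
  lab : X → V

attribute [instance] Net.fin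

/-- `N` is a binary phylogenetic network. -/
def Net.valid {X : Type} (N : Net X) : Prop := IsPhyloNet N.E N.lab

/-- Labelled isomorphism of two leaf-labelled digraphs. -/
def NetIso {X : Type} (N N' : Net X) : Prop := LabIso N.E N.lab N'.E N'.lab

/-- `N'` is obtained from `N` by one valid head move. -/
def HeadMoveStep {X : Type} (N N' : Net X) : Prop :=
  N.valid ∧ N'.valid ∧ ∃ u v p c s t : N.V,
    N.E u v ∧ N.E p v ∧ p ≠ u ∧ N.E v c ∧ N.E s t ∧
    LabIso (headMoveEdges N.E u v p c s t) N.lab N'.E N'.lab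

/-- `N'` is obtained from `N` by one valid tail move. -/
def TailMoveStep {X : Type} (N N' : Net X) : Prop :=
  N.valid ∧ N'.valid ∧ ∃ u v p c s t : N.V,
    N.E u v ∧ N.E p u ∧ N.E u c ∧ c ≠ v ∧ N.E s t ∧
    LabIso (tailMoveEdges N.E u v p c s t) N.lab N'.E N'.lab

/-- The digraph obtained by subdividing the edge `(s,t)` with a fresh node (`none`). -/
def subdivEdge {V : Type} (E : V → V → Prop) (s t : V) : Option V → Option V → Prop
  | some a, some b => E a b ∧ (a, b) ≠ (s, t)
  | some a, none => a = s
  | none, some b => b = t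
  | none, none => False

/-- `N'` is obtained from `N` by one valid distance-`d` head move: after subdividing
the target edge `(s,t)` with a new node `v'`, a shortest path from the old head `v`
to `v'` in the underlying undirected graph has length at most `d + 1`. -/
def HeadMoveStepD {X : Type} (d : ℕ) (N N' : Net X) : Prop :=
  N.valid ∧ N'.valid ∧ ∃ u v p c s t : N.V,
    N.E u v ∧ N.E p v ∧ p ≠ u ∧ N.E v c ∧ N.E s t ∧
    (SimpleGraph.fromRel (subdivEdge N.E s t)).dist (some v) none ≤ d + 1 ∧
    LabIso (headMoveEdges N.E u v p c s t) N.lab N'.E N'.lab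

/-- `N` and `N'` are connected by a finite sequence of `R`-moves (up to labelled
isomorphism, i.e. renaming of vertices). -/
def ConnectedBy {X : Type} (R : Net X → Net X → Prop) (N N' : Net X) : Prop :=
  Relation.ReflTransGen (fun A B => R A B ∨ NetIso A B) N N'

/-- `N'` can be reached from `N` by at most `n` `R`-moves (up to labelled isomorphism). -/
def stepsLE {X : Type} (R : Net X → Net X → Prop) : ℕ → Net X → Net X → Prop
  | 0, N, N' => NetIso N N'
  | n + 1, N, N' => stepsLE R n N N' ∨ ∃ M, R N M ∧ stepsLE R n M N'

/-- `(V, E)` is a subdivision of `(W, F)` via the injection `φ`: every vertex outside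
the image of `φ` is a redundant (indeg 1, outdeg 1) node, and `F a b` holds iff there
is an `E`-path from `φ a` to `φ b` all of whose internal vertices avoid the image. -/
def IsSubdivision {W V : Type} (F : W → W → Prop) (E : V → V → Prop) (φ : W → V) : Prop :=
  Function.Injective φ ∧
  (∀ v, v ∉ Set.range φ → indeg E v = 1 ∧ outdeg E v = 1) ∧
  (∀ a b, F a b ↔ ∃ l : List V,
      List.Chain E (φ a) (l ++ [φ b]) ∧ ∀ x ∈ l, x ∉ Set.range φ)

/-- A rooted phylogenetic tree on `X`: a phylogenetic network with no reticulations. -/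
def IsTree {X : Type} (T : Net X) : Prop := T.valid ∧ reticCount T.E = 0

/-- The tree `T` is embedded in `N`: some `X`-labelled subgraph of `N` is a
subdivision of `T`. -/
def EmbeddedTree {X : Type} (T N : Net X) : Prop :=
  IsTree T ∧ ∃ (E' : N.V → N.V → Prop) (φ : T.V → N.V),
    (∀ a b, E' a b → N.E a b) ∧ IsSubdivision T.E E' φ ∧ ∀ x, φ (T.lab x) = N.lab x

/-- The digraph contains a triangle `t, s, r` with edges `(t,s), (t,r), (s,r)`. -/
def HasTriangle {V : Type} (E : V → V → Prop) : Prop :=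
  ∃ t s r, E t s ∧ E t r ∧ E s r

/-- The network has `k` reticulations at the top, with nodes `c` (child of the root),
`a i`, `b i` for `1 ≤ i ≤ k`. -/
def ReticsAtTop {V : Type} (E : V → V → Prop) (k : ℕ) (c : V) (a b : ℕ → V) : Prop :=
  (∃ ρ, IsRoot E ρ ∧ E ρ c) ∧ E c (a 1) ∧ E c (b 1) ∧
  (∀ i, 1 ≤ i → i ≤ k → E (a i) (b i) ∧ IsSplit E (a i) ∧ IsRetic E (b i)) ∧
  (∀ i, 1 ≤ i → i < k →
    ((E (a i) (a (i + 1)) ∧ E (b i) (b (i + 1))) ∨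
     (E (a i) (b (i + 1)) ∧ E (b i) (a (i + 1)))))

/-- The network has `k` reticulations neatly at the top. -/
def NeatlyAtTop {V : Type} (E : V → V → Prop) (k : ℕ) (c : V) (a b : ℕ → V) : Prop :=
  (∃ ρ, IsRoot E ρ ∧ E ρ c) ∧ E c (a 1) ∧ E c (b 1) ∧
  (∀ i, 1 ≤ i → i ≤ k → E (a i) (b i) ∧ IsSplit E (a i) ∧ IsRetic E (b i)) ∧
  (∀ i, 1 ≤ i → i < k → E (a i) (a (i + 1)) ∧ E (b i) (b (i + 1)))

/-! Let `r` be the reticulation, with child `c` and parents `q` and `w`, where the embedding of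
`T` avoids the edge `w → r`; in a tier-1 network the embedding then uses every other edge.
Moving the head of `w → r` onto an edge `s → t` whose tail `s` is the parent or a child of `w`
makes `w`, `s`, `r` a triangle, and `T` is re-embedded by turning `q → r → c` into `q → c` and
`s → t` into `s → r → t`. Such an edge exists unless the parent of `w` is `q` itself (then the
head of `q → r` goes onto the other out-edge of `w`, and `w` and `r` swap roles in the
embedding), or the parent of `w` is the root and the other child of `w` is a leaf, which cannot
happen because `q` has to descend from the root. -/

open Relation

section Degrees

variable {V : Type} {E : V → V → Prop} {v : V}

lemma card_subtype_eq_one_iff (P : V → Prop) :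
    Nat.card {z // P z} = 1 ↔ ∃ a, P a ∧ ∀ z, P z → z = a := by
  rw [Nat.card_eq_one_iff_exists]
  exact ⟨fun ⟨⟨a, ha⟩, h⟩ => ⟨a, ha, fun z hz => congrArg Subtype.val (h ⟨z, hz⟩)⟩,
    fun ⟨a, ha, h⟩ => ⟨⟨a, ha⟩, fun z => Subtype.ext (h z.1 z.2)⟩⟩

lemma card_subtype_eq_two_iff (P : V → Prop) :
    Nat.card {z // P z} = 2 ↔ ∃ a b, a ≠ b ∧ P a ∧ P b ∧ ∀ z, P z → z = a ∨ z = b := by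
  rw [Nat.card_eq_two_iff]
  constructor
  · rintro ⟨⟨a, ha⟩, ⟨b, hb⟩, hab, huniv⟩
    refine ⟨a, b, fun h => hab (Subtype.ext h), ha, hb, fun z hz => ?_⟩
    have : (⟨z, hz⟩ : {z // P z}) ∈ ({⟨a, ha⟩, ⟨b, hb⟩} : Set {z // P z}) := huniv ▸ trivial
    simpa [Subtype.ext_iff] using this
  · rintro ⟨a, b, hab, ha, hb, h⟩
    refine ⟨⟨a, ha⟩, ⟨b, hb⟩, fun h' => hab (congrArg Subtype.val h'), ?_⟩
    ext ⟨z, hz⟩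
    simpa [Subtype.ext_iff] using h z hz

lemma indeg_eq_zero_iff [Finite V] : indeg E v = 0 ↔ ∀ u, ¬E u v := by
  simp [indeg, Finite.card_eq_zero_iff, isEmpty_subtype]

lemma indeg_eq_one_iff : indeg E v = 1 ↔ ∃ u, E u v ∧ ∀ u', E u' v → u' = u :=
  card_subtype_eq_one_iff _

lemma indeg_eq_two_iff :
    indeg E v = 2 ↔ ∃ a b, a ≠ b ∧ E a v ∧ E b v ∧ ∀ u, E u v → u = a ∨ u = b :=
  card_subtype_eq_two_iff _

lemma outdeg_eq_zero_iff [Finite V] : outdeg E v = 0 ↔ ∀ w, ¬E v w :=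
  indeg_eq_zero_iff (E := flip E)

lemma outdeg_eq_one_iff : outdeg E v = 1 ↔ ∃ w, E v w ∧ ∀ w', E v w' → w' = w :=
  indeg_eq_one_iff (E := flip E)

lemma outdeg_eq_two_iff :
    outdeg E v = 2 ↔ ∃ a b, a ≠ b ∧ E v a ∧ E v b ∧ ∀ w, E v w → w = a ∨ w = b :=
  indeg_eq_two_iff (E := flip E)

lemma card_exchange [Finite V] {P D A : V → Prop} (hD : ∀ z, D z → P z)
    (hA : ∀ z, A z → P z → D z)
    (hDA : Nat.card {z // D z} = Nat.card {z // A z}) :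
    Nat.card {z // P z ∧ ¬D z ∨ A z} = Nat.card {z // P z} := by
  have hcard (Q : V → Prop) : Nat.card {z // Q z} = {z | Q z}.ncard := Nat.card_coe_set_eq _
  have hdisj : Disjoint {z | P z ∧ ¬D z} {z | A z} :=
    Set.disjoint_left.2 fun z hz hAz => hz.2 (hA z hAz hz.1)
  have h₁ := Set.ncard_union_eq hdisj (Set.toFinite _) (Set.toFinite _)
  have h₂ := Set.ncard_sdiff_add_ncard_of_subset (s := {z | D z}) (t := {z | P z}) hD (Set.toFinite _)
  rw [hcard, hcard] at hDA
  rw [hcard, hcard, ← h₂, hDA]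
  exact h₁

end Degrees

section Relocate

variable {V : Type} {E F : V → V → Prop} {r p c s t : V}

/-- Move the subdivision vertex `r` off the path `p → r → c` (which becomes the edge
`p → c`) onto the edge `s → t` (which becomes the path `s → r → t`). -/
def relocateEdges (E : V → V → Prop) (r p c s t : V) (a b : V) : Prop :=
  E a b ∧ ¬((a, b) = (p, r) ∨ (a, b) = (r, c) ∨ (a, b) = (s, t)) ∨
    ((a, b) = (p, c) ∨ (a, b) = (s, r) ∨ (a, b) = (r, t))

lemma relocateEdges_mono (h : ∀ a b, E a b → F a b) {a b : V} :
    relocateEdges E r p c s t a b → relocateEdges F r p c s t a b :=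
  Or.imp_left fun hab => ⟨h a b hab.1, hab.2⟩

lemma headMoveEdges_eq_relocateEdges {u : V} (hur : E u r) (hup : u ≠ p) (hur' : u ≠ r)
    (htr : t ≠ r) : headMoveEdges E u r p c s t = relocateEdges E r p c s t := by
  funext a b
  unfold headMoveEdges relocateEdges
  have hrt : r ≠ t := htr.symm
  by_cases hab : (a, b) = (u, r)
  · simp_all [Prod.ext_iff]
  · simp only [hab, or_false, ne_eq, not_false_eq_true, and_true, not_or]

variable [Finite V]

lemma indeg_relocateEdges (hpr : E p r) (hrc : E r c) (hst : E s t) (hpc : ¬E p c)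
    (hsr : E s r → s = p) (hrt : ¬E r t) (hcr : c ≠ r) (htr : t ≠ r) (htc : t ≠ c) (v : V) :
    indeg (relocateEdges E r p c s t) v = indeg E v := by
  refine card_exchange ?_ ?_ ?_
  · rintro a (h | h | h) <;> simp_all
  · rintro a (h | h | h) hav <;> simp_all
  · rcases eq_or_ne v r with rfl | hvr
    · simp [hcr.symm, htr.symm]
    rcases eq_or_ne v c with rfl | hvc
    · simp [hcr, htc.symm]
    rcases eq_or_ne v t with rfl | hvt
    · simp [htr, htc]
    · simp [hvr, hvc, hvt]

lemma outdeg_relocateEdges (hpr : E p r) (hrc : E r c) (hst : E s t) (hpc : ¬E p c)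
    (hsr : E s r → s = p) (hrt : ¬E r t) (hcr : c ≠ r) (htr : t ≠ r) (htc : t ≠ c) (v : V) :
    outdeg (relocateEdges E r p c s t) v = outdeg E v := by
  classical
  refine card_exchange ?_ ?_ ?_
  · rintro b (h | h | h) <;> simp_all
  · rintro b (h | h | h) hvb <;> simp_all
  -- the heads `r, c, t` of the removed edges are cycled to the heads `c, t, r` of the added ones
  let g : Equiv.Perm V := Equiv.swap r c * Equiv.swap c t
  have hg : ∀ b, (g b = c ↔ b = r) ∧ (g b = t ↔ b = c) ∧ (g b = r ↔ b = t) := by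
    have h : g r = c ∧ g c = t ∧ g t = r := by
      simp [g, Equiv.swap_apply_of_ne_of_ne, hcr.symm, htr.symm, htr, htc]
    intro b
    exact ⟨by rw [← h.1, g.injective.eq_iff], by rw [← h.2.1, g.injective.eq_iff],
      by rw [← h.2.2, g.injective.eq_iff]⟩
  refine Nat.card_congr (Equiv.subtypeEquiv g fun b => ?_)
  simp only [Prod.mk.injEq, (hg b).1, (hg b).2.1, (hg b).2.2]
  tauto

end Relocate

lemma acyclic_of_lift {V : Type} {E F : V → V → Prop} (hE : Acyclic E) {r t : V} (htr : t ≠ r)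
    (hlift : ∀ a b, F a b → a ≠ r → b ≠ r → TransGen E a b)
    (hout : ∀ b, F r b → b = t) (hin : ∀ a, F a r → ¬ReflTransGen E t a) : Acyclic F := by
  -- a cycle avoiding `r` lifts to `E`; once a walk has left `r` through `t` it stays in `E` and
  -- can never re-enter `r`
  have from_exit : ∀ x, ReflTransGen F t x → ReflTransGen E t x ∧ x ≠ r := by
    intro x hx
    induction hx with
    | refl => exact ⟨.refl, htr⟩
    | @tail y x _ hyx ih =>
      have hxr : x ≠ r := by rintro rfl; exact hin y hyx ih.1
      exact ⟨ih.1.trans (hlift y x hyx ih.2 hxr).to_reflTransGen, hxr⟩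
  have lift_or_through : ∀ a b, TransGen F a b →
      TransGen E a b ∨ ReflTransGen F a r ∧ ReflTransGen F r b := by
    intro a b h
    induction h with
    | @single b hab =>
      by_cases ha : a = r
      · exact .inr ⟨ha ▸ .refl, .single (ha ▸ hab)⟩
      by_cases hb : b = r
      · exact .inr ⟨.single (hb ▸ hab), hb ▸ .refl⟩
      exact .inl (hlift a b hab ha hb)
    | @tail y x hay hyx ih =>
      rcases ih with ih | ⟨har, hry⟩
      · by_cases hy : y = r
        · exact .inr ⟨hy ▸ hay.to_reflTransGen, .single (hy ▸ hyx)⟩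
        by_cases hx : x = r
        · exact .inr ⟨hx ▸ (hay.tail hyx).to_reflTransGen, hx ▸ .refl⟩
        exact .inl (ih.trans (hlift y x hyx hy hx))
      · exact .inr ⟨har, hry.tail hyx⟩
  intro v hv
  rcases lift_or_through v v hv with h | ⟨hvr, hrv⟩
  · exact hE v h
  · obtain ⟨b, hrb, hbr⟩ := TransGen.head'_iff.mp (.trans_right hrv (hv.trans_left hvr))
    exact (from_exit r (hout b hrb ▸ hbr)).2 rfl

section PhyloNet

variable {V X : Type} {E : V → V → Prop} {lab : X → V} {ρ a b v : V}

lemma IsRoot.child_unique (h : IsRoot E ρ) (ha : E ρ a) (hb : E ρ b) : a = b := by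
  obtain ⟨z, -, hz⟩ := outdeg_eq_one_iff.1 h.2
  exact (hz a ha).trans (hz b hb).symm

lemma IsSplit.exists_other_child (h : IsSplit E v) (hb : E v b) :
    ∃ b', E v b' ∧ b' ≠ b ∧ ∀ z, E v z → z = b ∨ z = b' := by
  obtain ⟨x, y, hxy, hx, hy, hxy'⟩ := outdeg_eq_two_iff.1 h.2
  rcases hxy' b hb with rfl | rfl
  · exact ⟨y, hy, hxy.symm, hxy'⟩
  · exact ⟨x, hx, hxy, fun z hz => (hxy' z hz).symm⟩

variable [Fintype V]

lemma IsPhyloNet.of_degrees (hN : IsPhyloNet E lab) {F : V → V → Prop} (hF : Acyclic F)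
    (hin : ∀ v, indeg F v = indeg E v) (hout : ∀ v, outdeg F v = outdeg E v) :
    IsPhyloNet F lab where
  acyclic := hF
  root_unique := by simpa only [IsRoot, hin, hout] using hN.root_unique
  lab_inj := hN.lab_inj
  leaf_iff := by simpa only [IsLeafNode, hin, hout] using hN.leaf_iff
  node_types := by simpa only [IsRoot, IsLeafNode, IsSplit, IsRetic, hin, hout] using hN.node_types

lemma IsRoot.not_edge (h : IsRoot E ρ) (u : V) : ¬E u ρ :=
  indeg_eq_zero_iff.1 h.1 u

namespace IsPhyloNet

variable (hN : IsPhyloNet E lab)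
include hN

lemma irrefl (a : V) : ¬E a a :=
  fun h => hN.acyclic a (.single h)

lemma exists_parent (hv : ¬IsRoot E v) : ∃ u, E u v := by
  have : indeg E v ≠ 0 := by
    rcases hN.node_types v with h | h | h | h
    exacts [absurd h hv, by simp [h.1], by simp [h.1], by simp [h.1]]
  simpa [indeg_eq_zero_iff] using this

lemma parent_unique (hv : ¬IsRetic E v) (ha : E a v) (hb : E b v) : a = b := by
  have : indeg E v = 1 := by
    rcases hN.node_types v with h | h | h | h
    exacts [absurd ha (h.not_edge a), h.1, h.1, absurd h hv]
  obtain ⟨z, -, hz⟩ := indeg_eq_one_iff.1 this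
  exact (hz a ha).trans (hz b hb).symm

lemma not_edge_lab (x : X) (b : V) : ¬E (lab x) b :=
  outdeg_eq_zero_iff.1 ((hN.leaf_iff _).2 ⟨x, rfl⟩).2 b

lemma isSplit_of_edges (hav : E a v) (hvb : E v b) (hv : ¬IsRetic E v) : IsSplit E v := by
  rcases hN.node_types v with h | h | h | h
  · exact absurd hav (h.not_edge a)
  · exact absurd hvb (outdeg_eq_zero_iff.1 h.2 b)
  · exact h
  · exact absurd h hv

lemma reflTransGen_of_isRoot (hρ : IsRoot E ρ) (v : V) : ReflTransGen E ρ v := by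
  have : IsTrans V (TransGen E) := ⟨fun _ _ _ => TransGen.trans⟩
  have : Std.Irrefl (TransGen E) := ⟨hN.acyclic⟩
  refine (Finite.wellFounded_of_trans_of_irrefl (TransGen E)).induction v fun v ih => ?_
  by_cases hv : IsRoot E v
  · rw [hN.root_unique.unique hρ hv]
  · obtain ⟨u, hu⟩ := hN.exists_parent hv
    exact (ih u (.single hu)).tail hu

end IsPhyloNet

end PhyloNet

section Paths

variable {V : Type} {R R' : V → V → Prop} {S : Set V} {x y m : V}

inductive PathAvoiding (R : V → V → Prop) (S : Set V) : V → V → Prop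
  | single {x y : V} : R x y → PathAvoiding R S x y
  | cons {x m y : V} : R x m → m ∉ S → PathAvoiding R S m y → PathAvoiding R S x y

namespace PathAvoiding

set_option linter.deprecated false in
lemma iff_chain :
    PathAvoiding R S x y ↔ ∃ l : List V, List.Chain R x (l ++ [y]) ∧ ∀ z ∈ l, z ∉ S := by
  constructor
  · intro h
    induction h with
    | single h => exact ⟨[], List.isChain_pair.2 h, by simp⟩
    | cons h hm _ ih =>
      obtain ⟨l, hl, hlS⟩ := ih
      exact ⟨_ :: l, List.isChain_cons_cons.2 ⟨h, hl⟩, by simpa using ⟨hm, hlS⟩⟩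
  · rintro ⟨l, hl, hlS⟩
    induction l generalizing x with
    | nil => exact .single (List.isChain_pair.1 hl)
    | cons z l ih =>
      obtain ⟨hxz, hl⟩ := List.isChain_cons_cons.1 hl
      exact .cons hxz (hlS z (by simp)) (ih hl fun z' hz' => hlS z' (by simp [hz']))

lemma trans (h₁ : PathAvoiding R S x m) (hm : m ∉ S) (h₂ : PathAvoiding R S m y) :
    PathAvoiding R S x y := by
  induction h₁ with
  | single h => exact .cons h hm h₂
  | cons h hm' _ ih => exact .cons h hm' (ih hm h₂)

lemma lift (hR : ∀ a b, R a b → PathAvoiding R' S a b) (h : PathAvoiding R S x y) :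
    PathAvoiding R' S x y := by
  induction h with
  | single h => exact hR _ _ h
  | cons h hm _ ih => exact (hR _ _ h).trans hm ih

lemma map (f : V → V) (hf : ∀ z ∉ S, f z ∉ S) (hR : ∀ a b, R a b → R' (f a) (f b))
    (h : PathAvoiding R S x y) : PathAvoiding R' S (f x) (f y) := by
  induction h with
  | single h => exact .single (hR _ _ h)
  | cons h hm _ ih => exact .cons (hR _ _ h) (hf _ hm) ih

lemma exists_first (h : PathAvoiding R S x y) : ∃ z, R x z := by
  cases h with
  | single h => exact ⟨_, h⟩
  | cons h _ _ => exact ⟨_, h⟩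

lemma exists_last (h : PathAvoiding R S x y) : ∃ z, R z y := by
  induction h with
  | single h => exact ⟨_, h⟩
  | cons _ _ _ ih => exact ih

lemma eq_of_unique_out (hS : ∀ v ∉ S, ∀ a b, R v a → R v b → a = b)
    {y₁ y₂ : V} (h₁ : PathAvoiding R S x y₁) (h₂ : PathAvoiding R S x y₂)
    (hx : ∀ a b, R x a → R x b → a = b) (hy₁ : y₁ ∈ S) (hy₂ : y₂ ∈ S) : y₁ = y₂ := by
  induction h₁ with
  | single h =>
    cases h₂ with
    | single h' => exact hx _ _ h h'
    | cons h' hm _ => exact absurd (hx _ _ h h' ▸ hy₁) hm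
  | cons h hm _ ih =>
    cases h₂ with
    | single h' => exact absurd (hx _ _ h' h ▸ hy₂) hm
    | cons h' _ h₂ =>
      obtain rfl := hx _ _ h h'
      exact ih h₂ (hS _ hm) hy₁

end PathAvoiding

def suppressEdges (E : V → V → Prop) (r : V) (a b : V) : Prop :=
  a ≠ r ∧ b ≠ r ∧ (E a b ∨ E a r ∧ E r b)

lemma pathAvoiding_suppressEdges_iff {r : V} (hrS : r ∉ S) (hx : x ≠ r) (hy : y ≠ r) :
    PathAvoiding (suppressEdges R r) S x y ↔ PathAvoiding R S x y := by
  refine ⟨.lift fun a b ⟨_, _, hab⟩ => hab.elim .single fun h => .cons h.1 hrS (.single h.2),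
    fun h => ?_⟩
  suffices key : (x ≠ r → PathAvoiding (suppressEdges R r) S x y) ∧
      (x = r → ∀ a, R a r → a ≠ r → PathAvoiding (suppressEdges R r) S a y) from key.1 hx
  clear hx
  induction h with
  | single h =>
    exact ⟨fun hx => .single ⟨hx, hy, .inl h⟩,
      fun hx a ha har => .single ⟨har, hy, .inr ⟨ha, hx ▸ h⟩⟩⟩
  | @cons x m y h hm _ ih =>
    replace ih := ih hy
    by_cases hmr : m = r
    · subst hmr
      exact ⟨fun hx => ih.2 rfl x h hx, fun _ => ih.2 rfl⟩
    · exact ⟨fun hx => .cons ⟨hx, hmr, .inl h⟩ hm (ih.1 hmr),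
        fun hx a ha har => .cons ⟨har, hmr, .inr ⟨ha, hx ▸ h⟩⟩ hm (ih.1 hmr)⟩

lemma suppressEdges_relocateEdges {E : V → V → Prop} {r p c s t : V}
    (hin : ∀ a, E a r → a = p) (hout : ∀ b, E r b → b = c) (hpr : E p r) (hrc : E r c)
    (hst : E s t) :
    suppressEdges (relocateEdges E r p c s t) r = suppressEdges E r := by
  funext a b
  simp only [suppressEdges, relocateEdges, Prod.mk.injEq]
  grind

end Paths

section Subdivision

open Set

variable {W V : Type} {F : W → W → Prop} {E E₂ : V → V → Prop} {φ : W → V} {a b : W}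

lemma isSubdivision_iff : IsSubdivision F E φ ↔ Function.Injective φ ∧
    (∀ v ∉ range φ, indeg E v = 1 ∧ outdeg E v = 1) ∧
    ∀ a b, F a b ↔ PathAvoiding E (range φ) (φ a) (φ b) := by
  simp only [IsSubdivision, PathAvoiding.iff_chain]

namespace IsSubdivision

variable (h : IsSubdivision F E φ)
include h

lemma edge_iff : F a b ↔ PathAvoiding E (range φ) (φ a) (φ b) :=
  (isSubdivision_iff.1 h).2.2 a b

lemma exists_edge_into (hab : F a b) : ∃ u, E u (φ b) :=
  (h.edge_iff.1 hab).exists_last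

lemma exists_edge_from (hab : F a b) : ∃ v, E (φ a) v :=
  (h.edge_iff.1 hab).exists_first

lemma exists_edge_into_of_not_mem {v : V} (hv : v ∉ range φ) : ∃ u, E u v :=
  (indeg_eq_one_iff.1 (h.2.1 v hv).1).imp fun _ hu => hu.1

lemma eq_of_unique_out (hu : ∀ x y, E (φ a) x → E (φ a) y → x = y) {b₁ b₂ : W}
    (h₁ : F a b₁) (h₂ : F a b₂) : b₁ = b₂ := by
  have hS : ∀ v ∉ range φ, ∀ x y, E v x → E v y → x = y := fun v hv x y hx hy => by
    obtain ⟨z, -, hz⟩ := outdeg_eq_one_iff.1 (h.2.1 v hv).2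
    exact (hz x hx).trans (hz y hy).symm
  exact h.1 ((h.edge_iff.1 h₁).eq_of_unique_out hS (h.edge_iff.1 h₂) hu ⟨b₁, rfl⟩ ⟨b₂, rfl⟩)

lemma congr (hdeg : ∀ v ∉ range φ, indeg E₂ v = 1 ∧ outdeg E₂ v = 1)
    (hpath : ∀ a b, PathAvoiding E₂ (range φ) (φ a) (φ b) ↔
      PathAvoiding E (range φ) (φ a) (φ b)) :
    IsSubdivision F E₂ φ :=
  isSubdivision_iff.2 ⟨h.1, hdeg, fun a b => h.edge_iff.trans (hpath a b).symm⟩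

lemma relocateEdges [Finite V] {r p c s t : V} (hr : r ∉ range φ) (hin : ∀ a, E a r → a = p)
    (hout : ∀ b, E r b → b = c) (hpr : E p r) (hrc : E r c) (hst : E s t) (hpc : ¬E p c)
    (htr : t ≠ r) (htc : t ≠ c) :
    IsSubdivision F (relocateEdges E r p c s t) φ := by
  have hcr : c ≠ r := fun hcr => hpc (hcr ▸ hpr)
  have hrt : ¬E r t := fun h => htc (hout t h)
  refine h.congr (fun v hv => ?_) fun a b => ?_
  · rw [indeg_relocateEdges hpr hrc hst hpc (hin s) hrt hcr htr htc,
      outdeg_relocateEdges hpr hrc hst hpc (hin s) hrt hcr htr htc]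
    exact h.2.1 v hv
  · have hφr : ∀ a, φ a ≠ r := fun a ha => hr ⟨a, ha⟩
    rw [← pathAvoiding_suppressEdges_iff hr (hφr a) (hφr b),
      suppressEdges_relocateEdges hin hout hpr hrc hst,
      pathAvoiding_suppressEdges_iff hr (hφr a) (hφr b)]

lemma comap_perm (σ : Equiv.Perm V) (hσ : ∀ a, σ (φ a) = φ a) :
    IsSubdivision F (fun x y => E (σ x) (σ y)) φ := by
  have hrange : ∀ v, σ v ∈ range φ ↔ v ∈ range φ := fun v =>
    ⟨fun ⟨a, ha⟩ => ⟨a, σ.injective (by rw [hσ, ha])⟩, fun ⟨a, ha⟩ => ⟨a, ha ▸ (hσ a).symm⟩⟩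
  refine h.congr (fun v hv => ?_) fun a b => ⟨fun hp => ?_, fun hp => ?_⟩
  · have hσv := h.2.1 (σ v) ((hrange v).not.2 hv)
    exact ⟨(Nat.card_congr (σ.subtypeEquiv fun _ => Iff.rfl)).trans hσv.1,
      (Nat.card_congr (σ.subtypeEquiv fun _ => Iff.rfl)).trans hσv.2⟩
  · simpa only [hσ] using hp.map σ (fun z hz => (hrange z).not.2 hz) fun x y hxy => hxy
  · have hσ' : ∀ a, σ.symm (φ a) = φ a := fun a => σ.symm_apply_eq.2 (hσ a).symm
    simpa only [hσ'] using hp.map (R' := fun x y => E (σ x) (σ y)) σ.symm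
      (fun z hz => by rwa [← hrange, Equiv.apply_symm_apply]) fun x y hxy => by simpa using hxy

end IsSubdivision

end Subdivision

structure ReticNbhd {V : Type} (E : V → V → Prop) (r p u c : V) : Prop where
  left : E p r
  right : E u r
  ne : p ≠ u
  parent_eq : ∀ a, E a r → a = p ∨ a = u
  child : E r c
  child_eq : ∀ b, E r b → b = c
  child_parent_eq : ∀ a, E a c → a = r

lemma ReticNbhd.symm {V : Type} {E : V → V → Prop} {r p u c : V} (h : ReticNbhd E r p u c) :
    ReticNbhd E r u p c :=
  ⟨h.right, h.left, h.ne.symm, fun a ha => (h.parent_eq a ha).symm, h.child, h.child_eq,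
    h.child_parent_eq⟩

section Move

variable {V X : Type} {E : V → V → Prop} {lab : X → V} {r p u c s t : V}

lemma isPhyloNet_relocateEdges [Fintype V] (hN : IsPhyloNet E lab) (hr : ReticNbhd E r p u c)
    (hst : E s t) (hsu : s ≠ u) (hsr : s ≠ r) (htr : t ≠ r) (htu : ¬ReflTransGen E t u) :
    IsPhyloNet (relocateEdges E r p c s t) lab := by
  have hcr : c ≠ r := fun h => hN.irrefl r (h ▸ hr.child)
  have hpr : p ≠ r := fun h => hN.irrefl r (h ▸ hr.left)
  have htc : t ≠ c := fun h => hsr (hr.child_parent_eq s (h ▸ hst))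
  have hpc : ¬E p c := fun h => hpr (hr.child_parent_eq p h)
  have hsr' : E s r → s = p := fun h => (hr.parent_eq s h).resolve_right hsu
  have hrt : ¬E r t := fun h => htc (hr.child_eq t h)
  refine hN.of_degrees ?_ (indeg_relocateEdges hr.left hr.child hst hpc hsr' hrt hcr htr htc)
    (outdeg_relocateEdges hr.left hr.child hst hpc hsr' hrt hcr htr htc)
  refine acyclic_of_lift hN.acyclic htr ?_ ?_ ?_
  · rintro a b (⟨hab, -⟩ | hab | hab | hab) ha hb
    · exact .single hab
    · obtain ⟨rfl, rfl⟩ := Prod.mk.inj hab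
      exact .tail (.single hr.left) hr.child
    · exact absurd (Prod.mk.inj hab).2 hb
    · exact absurd (Prod.mk.inj hab).1 ha
  · rintro b (⟨hrb, hne⟩ | hab | hab | hab)
    · exact absurd (.inr (.inl (by rw [hr.child_eq b hrb]))) hne
    · exact absurd (Prod.mk.inj hab).1.symm hpr
    · exact absurd (Prod.mk.inj hab).1.symm hsr
    · exact (Prod.mk.inj hab).2
  · rintro a (⟨har, hne⟩ | hab | hab | hab)
    · obtain rfl := (hr.parent_eq a har).resolve_left fun hap => hne (.inl (by rw [hap]))
      exact htu
    · exact absurd (Prod.mk.inj hab).2.symm hcr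
    · obtain ⟨rfl, -⟩ := Prod.mk.inj hab
      exact fun hts => hN.acyclic a ((TransGen.single hst).trans_left hts)
    · exact absurd (Prod.mk.inj hab).2.symm htr

lemma hasTriangle_relocateEdges (hr : ReticNbhd E r p u c) (hus : E u s ∨ E s u)
    (hsu : s ≠ u) (hsr : s ≠ r) (hur : u ≠ r) (htu : t ≠ u) :
    HasTriangle (relocateEdges E r p c s t) := by
  have hur' : relocateEdges E r p c s t u r := .inl ⟨hr.right, by simp [hr.ne.symm, hur, hsu.symm]⟩
  have hsr' : relocateEdges E r p c s t s r := .inr (.inr (.inl rfl))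
  rcases hus with h | h
  · exact ⟨u, s, r, .inl ⟨h, by simp [hr.ne.symm, hur, hsu.symm]⟩, hur', hsr'⟩
  · exact ⟨s, u, r, .inl ⟨h, by simp [hur, hsr, htu.symm]⟩, hsr', hur'⟩

end Move

def Net.relocate {X : Type} (N : Net X) (r p c s t : N.V) : Net X :=
  ⟨N.V, N.fin, relocateEdges N.E r p c s t, N.lab⟩

lemma headMoveStep_relocate {X : Type} {N : Net X} (hN : N.valid) {r p u c s t : N.V}
    (hr : ReticNbhd N.E r p u c) (hst : N.E s t) (hsu : s ≠ u) (hsr : s ≠ r) (htr : t ≠ r)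
    (htu : ¬ReflTransGen N.E t u) : HeadMoveStep N (N.relocate r p c s t) := by
  have hur : u ≠ r := fun h => hN.irrefl r (h ▸ hr.right)
  refine ⟨hN, isPhyloNet_relocateEdges hN hr hst hsu hsr htr htu, u, r, p, c, s, t, hr.right,
    hr.left, hr.ne, hr.child, hst, Equiv.refl _, fun a b => ?_, fun _ => rfl⟩
  rw [headMoveEdges_eq_relocateEdges hr.right hr.ne.symm hur htr]
  rfl

def deleteEdge {V : Type} (E : V → V → Prop) (u v : V) (a b : V) : Prop :=
  E a b ∧ (a, b) ≠ (u, v)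

lemma IsTree.not_isRetic {X : Type} {T : Net X} (hT : IsTree T) (v : T.V) : ¬IsRetic T.E v :=
  fun hv => (Finite.card_eq_zero_iff.1 hT.2).false ⟨v, hv⟩

section Embedding

open Set

variable {X : Type} {N T : Net X} {φ : T.V → N.V}

lemma embeddedTree_relocate (hN : N.valid) (hT : IsTree T) {r q w c s t : N.V}
    (hr : ReticNbhd N.E r q w c) (hsub : IsSubdivision T.E (deleteEdge N.E w r) φ)
    (hlab : ∀ x, φ (T.lab x) = N.lab x) (hrφ : r ∉ range φ) (hst : N.E s t) (hsr : s ≠ r)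
    (htr : t ≠ r) : EmbeddedTree T (N.relocate r q c s t) := by
  have hwr : w ≠ r := fun h => hN.irrefl r (h ▸ hr.right)
  have hqr : q ≠ r := fun h => hN.irrefl r (h ▸ hr.left)
  refine ⟨hT, _, φ, fun a b => relocateEdges_mono fun _ _ h => h.1,
    hsub.relocateEdges hrφ ?_ (fun b hb => hr.child_eq b hb.1) ⟨hr.left, by simp [hr.ne]⟩
      ⟨hr.child, by simp [hwr.symm]⟩ ⟨hst, by simp [htr]⟩
      (fun h => hqr (hr.child_parent_eq q h.1)) htr
      (fun h => hsr (hr.child_parent_eq s (h ▸ hst))), hlab⟩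
  rintro a ⟨har, hne⟩
  exact (hr.parent_eq a har).resolve_right fun h => hne (by rw [h])

lemma embeddedTree_relocate_swap (hN : N.valid) (hT : IsTree T) {r q w c x : N.V}
    (hr : ReticNbhd N.E r q w c) (hsub : IsSubdivision T.E (deleteEdge N.E w r) φ)
    (hlab : ∀ x, φ (T.lab x) = N.lab x) (hrφ : r ∉ range φ) (hwφ : w ∉ range φ)
    (hqw : N.E q w) (hwx : N.E w x) (hxr : x ≠ r) (hin_w : ∀ a, N.E a w → a = q)
    (hout_w : ∀ b, N.E w b → b = r ∨ b = x) : EmbeddedTree T (N.relocate r w c w x) := by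
  classical
  have hcw : c ≠ w := fun h => hN.acyclic r (.tail (.single hr.child) (by rw [h]; exact hr.right))
  have hcr : c ≠ r := fun h => hN.irrefl r (h ▸ hr.child)
  have hxw : x ≠ w := fun h => hN.irrefl w (h ▸ hwx)
  -- after the move, `w` and `r` exchange their roles in the embedding
  refine ⟨hT, fun a b => deleteEdge N.E w r (Equiv.swap w r a) (Equiv.swap w r b), φ, ?_,
    hsub.comap_perm _ fun a => Equiv.swap_apply_of_ne_of_ne (fun h => hwφ ⟨a, h⟩)
      (fun h => hrφ ⟨a, h⟩), hlab⟩
  have hσ : ∀ v, v ≠ w → v ≠ r → Equiv.swap w r v = v := fun v => Equiv.swap_apply_of_ne_of_ne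
  rintro a b ⟨hab, hne⟩
  by_cases haw : a = w
  · rw [haw, Equiv.swap_apply_left] at hab
    rw [haw, ← Equiv.swap_apply_self w r b, hr.child_eq _ hab, hσ c hcw hcr]
    exact .inr (.inl rfl)
  by_cases har : a = r
  · rw [har, Equiv.swap_apply_right] at hab hne
    have hσb := (hout_w _ hab).resolve_left fun h => hne (by rw [h])
    rw [har, ← Equiv.swap_apply_self w r b, hσb, hσ x hxw hxr]
    exact .inr (.inr (.inr rfl))
  rw [hσ a haw har] at hab
  have hkeep : ¬((a, b) = (w, r) ∨ (a, b) = (r, c) ∨ (a, b) = (w, x)) := by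
    rintro (h | h | h) <;> [exact haw (Prod.mk.inj h).1; exact har (Prod.mk.inj h).1;
      exact haw (Prod.mk.inj h).1]
  by_cases hbw : b = w
  · rw [hbw, Equiv.swap_apply_left] at hab
    obtain rfl := (hr.parent_eq a hab).resolve_right haw
    exact .inl ⟨hbw ▸ hqw, hkeep⟩
  by_cases hbr : b = r
  · rw [hbr, Equiv.swap_apply_right] at hab
    obtain rfl := hin_w a hab
    exact .inl ⟨hbr ▸ hr.left, hkeep⟩
  exact .inl ⟨hσ b hbw hbr ▸ hab, hkeep⟩

end Embedding

section EmbeddingFacts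

open Set

namespace IsSubdivision

variable {X : Type} {N T : Net X} {E : N.V → N.V → Prop} {φ : T.V → N.V}
  (hsub : IsSubdivision T.E E φ) (hN : N.valid) (hT : IsTree T) (hEN : ∀ a b, E a b → N.E a b)
include hsub hT hEN

lemma map_root {t₀ : T.V} {ρ : N.V} (ht₀ : IsRoot T.E t₀) (hρ : IsRoot N.E ρ) : φ t₀ = ρ := by
  have hρφ : ρ ∈ range φ := by
    by_contra h
    obtain ⟨u, hu⟩ := hsub.exists_edge_into_of_not_mem h
    exact hρ.not_edge u (hEN _ _ hu)
  obtain ⟨β, rfl⟩ := hρφ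
  by_contra hne
  obtain ⟨α, hα⟩ := hT.1.exists_parent fun h => hne (by rw [hT.1.root_unique.unique ht₀ h])
  obtain ⟨u, hu⟩ := hsub.exists_edge_into hα
  exact hρ.not_edge u (hEN _ _ hu)

include hN

lemma exists_parent_of_edge {a v : N.V} (hav : N.E a v) : ∃ u, E u v := by
  by_cases hv : v ∈ range φ
  · obtain ⟨β, rfl⟩ := hv
    obtain ⟨t₀, ht₀, -⟩ := hT.1.root_unique
    obtain ⟨ρ, hρ, -⟩ := hN.root_unique
    have hβ : ¬IsRoot T.E β := fun h => hρ.not_edge a (hsub.map_root hT hEN h hρ ▸ hav)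
    obtain ⟨α, hα⟩ := hT.1.exists_parent hβ
    exact hsub.exists_edge_into hα
  · exact hsub.exists_edge_into_of_not_mem hv

lemma eq_deleteEdge {r q w : N.V} (hret : ∀ v, IsRetic N.E v → v = r)
    (hpar : ∀ a, N.E a r → a = q ∨ a = w) (hqr : E q r) (hwr : ¬E w r) :
    E = deleteEdge N.E w r := by
  funext a b
  refine propext ⟨fun h => ⟨hEN a b h, fun hab => hwr ?_⟩, fun ⟨hab, hne⟩ => ?_⟩
  · rwa [← (Prod.mk.inj hab).1, ← (Prod.mk.inj hab).2]
  by_cases hb : b = r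
  · subst hb
    exact (hpar a hab).elim (fun h => h ▸ hqr) fun h => absurd (by rw [h]) hne
  · obtain ⟨u, hu⟩ := hsub.exists_parent_of_edge hN hT hEN hab
    rwa [hN.parent_unique (fun h => hb (hret b h)) hab (hEN _ _ hu)]

lemma not_mem_range (hlab : ∀ x, φ (T.lab x) = N.lab x) {a v b : N.V} (hav : N.E a v)
    (hvb : N.E v b) (hu : ∀ x y, E v x → E v y → x = y) : v ∉ range φ := by
  rintro ⟨β, rfl⟩
  rcases hT.1.node_types β with h | h | h | h
  · obtain ⟨ρ, hρ, -⟩ := hN.root_unique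
    exact hρ.not_edge a (hsub.map_root hT hEN h hρ ▸ hav)
  · obtain ⟨x, rfl⟩ := (hT.1.leaf_iff β).1 h
    exact hN.not_edge_lab x b (hlab x ▸ hvb)
  · obtain ⟨b₁, b₂, hne, h₁, h₂, -⟩ := outdeg_eq_two_iff.1 h.2
    exact hne (hsub.eq_of_unique_out hu h₁ h₂)
  · exact hT.not_isRetic β h

end IsSubdivision

end EmbeddingFacts

lemma exists_reticNbhd {X : Type} {N T : Net X} (hN : N.valid) (h1 : reticCount N.E = 1)
    (hT : EmbeddedTree T N) :
    ∃ (r q w c : N.V) (φ : T.V → N.V), (∀ v, IsRetic N.E v → v = r) ∧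
      ReticNbhd N.E r q w c ∧ IsSubdivision T.E (deleteEdge N.E w r) φ ∧
      (∀ x, φ (T.lab x) = N.lab x) ∧ r ∉ Set.range φ ∧ w ∉ Set.range φ ∧ IsSplit N.E w := by
  obtain ⟨hT, E, φ, hEN, hsub, hlab⟩ := hT
  obtain ⟨r, hr, hret⟩ := (card_subtype_eq_one_iff _).1 h1
  obtain ⟨p₁, p₂, hp, hp₁, hp₂, hpar⟩ := indeg_eq_two_iff.1 hr.1
  obtain ⟨c, hrc, hc⟩ := outdeg_eq_one_iff.1 hr.2
  have hrφ := hsub.not_mem_range hN hT hEN hlab hp₁ hrc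
    fun x y hx hy => (hc x (hEN _ _ hx)).trans (hc y (hEN _ _ hy)).symm
  obtain ⟨q, hqr, hq⟩ := indeg_eq_one_iff.1 (hsub.2.1 r hrφ).1
  obtain ⟨w, hwr, hwq, hpar⟩ : ∃ w, N.E w r ∧ w ≠ q ∧ ∀ a, N.E a r → a = q ∨ a = w := by
    rcases hpar q (hEN _ _ hqr) with rfl | rfl
    · exact ⟨p₂, hp₂, hp.symm, hpar⟩
    · exact ⟨p₁, hp₁, hp, fun a ha => (hpar a ha).symm⟩
  obtain rfl := hsub.eq_deleteEdge hN hT hEN hret hpar hqr fun h => hwq (hq w h)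
  have hEN' : ∀ a b, deleteEdge N.E w r a b → N.E a b := fun _ _ h => h.1
  -- `w` is not the root, whose only out-edge lies in the embedding
  obtain ⟨g, hgw⟩ : ∃ g, N.E g w := by
    obtain ⟨t₀, ht₀, -⟩ := hT.1.root_unique
    obtain ⟨b₀, hb₀, -⟩ := outdeg_eq_one_iff.1 ht₀.2
    obtain ⟨y, hy, hyr⟩ := hsub.exists_edge_from hb₀
    refine hN.exists_parent fun hwρ => hyr ?_
    rw [hsub.map_root hT hEN' ht₀ hwρ] at hy ⊢
    rw [hwρ.child_unique hy hwr]
  have hw : IsSplit N.E w := hN.isSplit_of_edges hgw hwr fun h => hN.irrefl r (hret w h ▸ hwr)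
  obtain ⟨x, -, -, hout_w⟩ := hw.exists_other_child hwr
  have hx : ∀ z, deleteEdge N.E w r w z → z = x := fun z hz =>
    (hout_w z hz.1).resolve_left fun h => hz.2 (by rw [h])
  have hcr : c ≠ r := fun h => hN.irrefl r (h ▸ hrc)
  exact ⟨r, q, w, c, φ, hret, ⟨hqr.1, hwr, hwq.symm, hpar, hrc, hc,
    fun a ha => hN.parent_unique (fun h => hcr (hret c h)) ha hrc⟩, hsub, hlab, hrφ,
    hsub.not_mem_range hN hT hEN' hlab hgw hwr fun a b ha hb => (hx a ha).trans (hx b hb).symm,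
    hw⟩

section Moves

open Set

variable {X : Type} {N T : Net X} (hN : N.valid) (hT : IsTree T) {r q w c : N.V}
  (hr : ReticNbhd N.E r q w c) {φ : T.V → N.V} (hsub : IsSubdivision T.E (deleteEdge N.E w r) φ)
  (hlab : ∀ x, φ (T.lab x) = N.lab x) (hrφ : r ∉ range φ)
include hN hT hr hsub hlab hrφ

lemma exists_move_of_adj {s t : N.V} (hst : N.E s t) (hsw : s ≠ w) (hsr : s ≠ r) (htr : t ≠ r)
    (htw : ¬ReflTransGen N.E t w) (hadj : N.E w s ∨ N.E s w) :
    ∃ M : Net X, HeadMoveStep N M ∧ HasTriangle M.E ∧ EmbeddedTree T M :=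
  ⟨N.relocate r q c s t, headMoveStep_relocate hN hr hst hsw hsr htr htw,
    hasTriangle_relocateEdges hr hadj hsw hsr (fun h => hN.irrefl r (h ▸ hr.right))
      (fun h => htw (h ▸ .refl)),
    embeddedTree_relocate hN hT hr hsub hlab hrφ hst hsr htr⟩

lemma exists_move_swap (hwφ : w ∉ range φ) {x : N.V} (hqw : N.E q w) (hwx : N.E w x)
    (hxr : x ≠ r) (hin_w : ∀ a, N.E a w → a = q) (hout_w : ∀ b, N.E w b → b = r ∨ b = x) :
    ∃ M : Net X, HeadMoveStep N M ∧ HasTriangle M.E ∧ EmbeddedTree T M := by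
  have hwr : w ≠ r := fun h => hN.irrefl r (h ▸ hr.right)
  have hxq : ¬ReflTransGen N.E x q := fun h =>
    hN.acyclic q (((TransGen.single hqw).tail hwx).trans_left h)
  exact ⟨N.relocate r w c w x, headMoveStep_relocate hN hr.symm hwx hr.ne.symm hwr hxr hxq,
    hasTriangle_relocateEdges hr.symm (.inl hqw) hr.ne.symm hwr
      (fun h => hN.irrefl r (h ▸ hr.left)) (fun h => hxq (h ▸ .refl)),
    embeddedTree_relocate_swap hN hT hr hsub hlab hrφ hwφ hqw hwx hxr hin_w hout_w⟩

lemma exists_move_of_isRoot (hret : ∀ v, IsRetic N.E v → v = r) {g x : N.V} (hg : IsRoot N.E g)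
    (hgw : N.E g w) (hwx : N.E w x) (hxr : x ≠ r) (hout_w : ∀ b, N.E w b → b = r ∨ b = x) :
    ∃ M : Net X, HeadMoveStep N M ∧ HasTriangle M.E ∧ EmbeddedTree T M := by
  have hqr : q ≠ r := fun h => hN.irrefl r (h ▸ hr.left)
  have hbelow : ∀ y, N.E x y → ¬ReflTransGen N.E y w := fun y hxy h =>
    hN.acyclic w (((TransGen.single hwx).tail hxy).trans_left h)
  by_cases hxq : x = q
  · subst hxq
    have hx : IsSplit N.E x := hN.isSplit_of_edges hwx hr.left fun h => hqr (hret x h)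
    obtain ⟨y, hxy, hyr, -⟩ := hx.exists_other_child hr.left
    exact exists_move_of_adj hN hT hr hsub hlab hrφ hxy hr.ne hqr hyr (hbelow y hxy) (.inl hwx)
  by_cases hleaf : ∃ y, N.E x y
  · obtain ⟨y, hxy⟩ := hleaf
    refine exists_move_of_adj hN hT hr hsub hlab hrφ hxy (fun h => hN.irrefl w (h ▸ hwx)) hxr
      ?_ (hbelow y hxy) (.inl hwx)
    rintro rfl
    exact hN.irrefl w ((hr.parent_eq x hxy).resolve_left hxq ▸ hwx)
  -- otherwise `q` would not descend from the root `g`, whose only way down is through `w`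
  exfalso
  rcases (hN.reflTransGen_of_isRoot hg q).cases_head with hgq | ⟨z, hgz, hzq⟩
  · exact hN.irrefl r (hg.child_unique hgw (hgq ▸ hr.left) ▸ hr.right)
  rw [← hg.child_unique hgw hgz] at hzq
  rcases hzq.cases_head with hwq | ⟨z, hwz, hzq⟩
  · exact hr.ne hwq.symm
  rcases hout_w z hwz with rfl | rfl
  · exact hN.acyclic z ((TransGen.single hr.left).trans_right hzq)
  rcases hzq.cases_head with hxq' | ⟨y, hxy, -⟩
  exacts [hxq hxq', hleaf ⟨y, hxy⟩]

lemma exists_move_of_isSplit (hwφ : w ∉ range φ) {g x : N.V} (hg : IsSplit N.E g)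
    (hgw : N.E g w) (hin_w : ∀ a, N.E a w → a = g) (hwx : N.E w x) (hxr : x ≠ r)
    (hout_w : ∀ b, N.E w b → b = r ∨ b = x) :
    ∃ M : Net X, HeadMoveStep N M ∧ HasTriangle M.E ∧ EmbeddedTree T M := by
  obtain ⟨z, hgz, hzw, -⟩ := hg.exists_other_child hgw
  have hgw' : g ≠ w := fun h => hN.irrefl w (h ▸ hgw)
  by_cases hzr : z = r
  · obtain rfl : g = q := (hr.parent_eq g (hzr ▸ hgz)).resolve_right hgw'
    exact exists_move_swap hN hT hr hsub hlab hrφ hwφ hgw hwx hxr hin_w hout_w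
  have hzw' : ¬ReflTransGen N.E z w := fun h => by
    rcases h.cases_tail with h | ⟨y, hzy, hyw⟩
    exacts [hzw h.symm, hN.acyclic g ((TransGen.single hgz).trans_left (hin_w y hyw ▸ hzy))]
  exact exists_move_of_adj hN hT hr hsub hlab hrφ hgz hgw'
    (fun h => hN.acyclic r ((TransGen.single (h ▸ hgw)).tail hr.right)) hzr hzw' (.inr hgw)

end Moves

/-- every tier-1 network `N` with embedded tree `T` is one head move
away from a tier-1 network `M` that contains a triangle and has `T` as embedded tree. -/
theorem tier1_create_triangle {X : Type} (N T : Net X) (hN : N.valid)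
    (h1 : reticCount N.E = 1) (hT : EmbeddedTree T N) :
    ∃ M : Net X, HeadMoveStep N M ∧ HasTriangle M.E ∧ EmbeddedTree T M := by
  obtain ⟨r, q, w, c, φ, hret, hr, hsub, hlab, hrφ, hwφ, hw⟩ := exists_reticNbhd hN h1 hT
  obtain ⟨x, hwx, hxr, hout_w⟩ := hw.exists_other_child hr.right
  obtain ⟨g, hgw, hin_w⟩ := indeg_eq_one_iff.1 hw.1
  rcases hN.node_types g with hg | hg | hg | hg
  · exact exists_move_of_isRoot hN hT.1 hr hsub hlab hrφ hret hg hgw hwx hxr hout_w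
  · exact absurd hgw (outdeg_eq_zero_iff.1 hg.2 w)
  · exact exists_move_of_isSplit hN hT.1 hr hsub hlab hrφ hwφ hg hgw hin_w hwx hxr hout_w
  · exact (hN.acyclic r ((TransGen.single (hret g hg ▸ hgw)).tail hr.right)).elim

end Phylo
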